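/- Let X ∈ ℝ^{n×d}, y ∈ ℝ^n, A = [X y] ∈ ℝ^{n×(d+1)}, and let M ∈ ℝ^{p×(d+1)} be any matrix. Let = [A; M] ∈ ℝ^{(n+p)×(d+1)} be A with M stacked below it. Let S ∈ ℝ^{r×(n+p)} and 0 < μ < 1, and assume that for every v ∈ ℝ^{d+1}, (1−μ)‖Âv‖₂² ≤ ‖SÂv‖₂² ≤ (1+μ)‖Âv‖₂². If β ∈ ℝ^d minimizes the sketched objective β̃ ↦ ‖SÂβ̃₋₁‖₂, where β̃₋₁ = (β̃, −1), then for every β̃ ∈ ℝ^d, ‖Xβ − y‖₂² + ‖Mβ₋₁‖₂² ≤ ((1+μ)/(1−μ))·(‖Xβ̃ − y‖₂² + ‖Mβ̃₋₁‖₂²). In other words, solving the least-squares problem on the sketch SÂ yields an approximate minimizer of the regularized problem β̃ ↦ ‖Xβ̃ − y‖₂² + ‖Mβ̃₋₁‖₂². -/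

import Mathlib

/-!
The objective `‖Â β̃₋₁‖²` splits over the blocks of `Â = [A; M]` into `‖X β̃ - y‖² + ‖M β̃₋₁‖²`.
For this objective the chain `(1 - μ) ‖Â β₋₁‖² ≤ ‖S Â β₋₁‖² ≤ ‖S Â β̃₋₁‖² ≤ (1 + μ) ‖Â β̃₋₁‖²`,
whose middle step is the minimality of `β` for the sketched problem, gives the bound.
-/

open Matrix BigOperators

/-- Squared Euclidean norm of a vector. -/
def euclNormSq {ι : Type*} [Fintype ι] (v : ι → ℝ) : ℝ := ∑ i, (v i) ^ 2

/-- Euclidean norm of a vector. -/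
noncomputable def euclNorm {ι : Type*} [Fintype ι] (v : ι → ℝ) : ℝ :=
  Real.sqrt (∑ i, (v i) ^ 2)

section EuclNorm

variable {ι κ : Type*} [Fintype ι] [Fintype κ]

lemma euclNormSq_nonneg (v : ι → ℝ) : 0 ≤ euclNormSq v :=
  Finset.sum_nonneg fun _ _ => sq_nonneg _

lemma euclNorm_le_euclNorm_iff {u v : ι → ℝ} :
    euclNorm u ≤ euclNorm v ↔ euclNormSq u ≤ euclNormSq v :=
  Real.sqrt_le_sqrt_iff (euclNormSq_nonneg v)

lemma euclNormSq_sumElim (u : ι → ℝ) (v : κ → ℝ) :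
    euclNormSq (Sum.elim u v) = euclNormSq u + euclNormSq v := by
  simp only [euclNormSq, Fintype.sum_sum_type, Sum.elim_inl, Sum.elim_inr]

end EuclNorm

lemma le_div_mul_of_sketch_minimizer {α : Type*} {f g : α → ℝ} {μ : ℝ} (hμ : μ < 1)
    (hlower : ∀ a, (1 - μ) * f a ≤ g a) (hupper : ∀ a, g a ≤ (1 + μ) * f a)
    {a₀ a : α} (hmin : g a₀ ≤ g a) :
    f a₀ ≤ (1 + μ) / (1 - μ) * f a := by
  rw [div_mul_eq_mul_div, le_div_iff₀ (by linarith), mul_comm]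
  calc (1 - μ) * f a₀ ≤ g a₀ := hlower a₀
    _ ≤ g a := hmin
    _ ≤ (1 + μ) * f a := hupper a

lemma mulVec_sumElim_neg_one {m d : Type*} [Fintype d] (X : Matrix m d ℝ) (y : m → ℝ)
    (b : d → ℝ) :
    (fun i => Sum.elim (X i) (fun _ => y i) : Matrix m (d ⊕ Unit) ℝ) *ᵥ
        Sum.elim b (fun _ => -1) = X *ᵥ b - y := by
  ext i
  simp [mulVec, dotProduct, Fintype.sum_sum_type, sub_eq_add_neg]

theorem stmt5_general {n d p r : ℕ} (X : Matrix (Fin n) (Fin d) ℝ) (y : Fin n → ℝ)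
    (A : Matrix (Fin n) (Fin d ⊕ Unit) ℝ)
    (hA : A = fun i => Sum.elim (X i) (fun _ => y i))
    (M : Matrix (Fin p) (Fin d ⊕ Unit) ℝ)
    (Ahat : Matrix (Fin n ⊕ Fin p) (Fin d ⊕ Unit) ℝ)
    (hAhat : Ahat = Matrix.fromRows A M)
    (S : Matrix (Fin r) (Fin n ⊕ Fin p) ℝ) (μ : ℝ) (hμ1 : μ < 1)
    (hembed : ∀ v : Fin d ⊕ Unit → ℝ,
      (1 - μ) * euclNormSq (Ahat.mulVec v) ≤ euclNormSq ((S * Ahat).mulVec v) ∧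
      euclNormSq ((S * Ahat).mulVec v) ≤ (1 + μ) * euclNormSq (Ahat.mulVec v))
    (β : Fin d → ℝ)
    (hmin : ∀ βt : Fin d → ℝ,
      euclNorm ((S * Ahat).mulVec (Sum.elim β fun _ => -1)) ≤
        euclNorm ((S * Ahat).mulVec (Sum.elim βt fun _ => -1))) :
    ∀ βt : Fin d → ℝ,
      euclNormSq (X.mulVec β - y) + euclNormSq (M.mulVec (Sum.elim β fun _ => -1)) ≤
        ((1 + μ) / (1 - μ)) *
          (euclNormSq (X.mulVec βt - y) +
            euclNormSq (M.mulVec (Sum.elim βt fun _ => -1))) := by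
  intro βt
  have hobjective : ∀ b : Fin d → ℝ,
      euclNormSq (Ahat *ᵥ Sum.elim b fun _ => -1) =
        euclNormSq (X *ᵥ b - y) + euclNormSq (M *ᵥ Sum.elim b fun _ => -1) := by
    intro b
    rw [hAhat, fromRows_mulVec, euclNormSq_sumElim, hA, mulVec_sumElim_neg_one]
  rw [← hobjective, ← hobjective]
  exact le_div_mul_of_sketch_minimizer (f := fun b => euclNormSq (Ahat *ᵥ Sum.elim b fun _ => -1))
    hμ1 (fun _ => (hembed _).1) (fun _ => (hembed _).2) (euclNorm_le_euclNorm_iff.mp (hmin βt))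

/-- Solving least squares on a sketch of the noise-augmented matrix `Â = [A; M]`
(where `A = [X y]`) approximately minimizes the regularized objective
`β̃ ↦ ‖X β̃ − y‖₂² + ‖M β̃₋₁‖₂²`. -/
theorem stmt5 {n d p r : ℕ} (X : Matrix (Fin n) (Fin d) ℝ) (y : Fin n → ℝ)
    (A : Matrix (Fin n) (Fin d ⊕ Unit) ℝ)
    (hA : A = fun i => Sum.elim (X i) (fun _ => y i))
    (M : Matrix (Fin p) (Fin d ⊕ Unit) ℝ)
    (Ahat : Matrix (Fin n ⊕ Fin p) (Fin d ⊕ Unit) ℝ)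
    (hAhat : Ahat = Matrix.fromRows A M)
    (S : Matrix (Fin r) (Fin n ⊕ Fin p) ℝ) (μ : ℝ) (hμ0 : 0 < μ) (hμ1 : μ < 1)
    (hembed : ∀ v : Fin d ⊕ Unit → ℝ,
      (1 - μ) * euclNormSq (Ahat.mulVec v) ≤ euclNormSq ((S * Ahat).mulVec v) ∧
      euclNormSq ((S * Ahat).mulVec v) ≤ (1 + μ) * euclNormSq (Ahat.mulVec v))
    (β : Fin d → ℝ)
    (hmin : ∀ βt : Fin d → ℝ,
      euclNorm ((S * Ahat).mulVec (Sum.elim β fun _ => -1)) ≤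
        euclNorm ((S * Ahat).mulVec (Sum.elim βt fun _ => -1))) :
    ∀ βt : Fin d → ℝ,
      euclNormSq (X.mulVec β - y) + euclNormSq (M.mulVec (Sum.elim β fun _ => -1)) ≤
        ((1 + μ) / (1 - μ)) *
          (euclNormSq (X.mulVec βt - y) +
            euclNormSq (M.mulVec (Sum.elim βt fun _ => -1))) :=
  stmt5_general X y A hA M Ahat hAhat S μ hμ1 hembed β hmin
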